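/- arXiv:cs/0601018 — 3 statements merged into one kernel-verified Lean document; each statement's English description precedes it below -/
import Mathlib

section
/- Satisfaction in CRWL is invariant under signature morphisms (satisfaction condition): for a signature morphism σ : Σ → Σ', a CRWL-algebra 𝒜' over Σ', and a Σ-sentence φ, 𝒜' ⊨ σ(φ) if and only if 𝒜'_σ ⊨ φ, where 𝒜'_σ is the σ-reduct of 𝒜'. Consequently, ℐ_CRWL is an institution. -/
/-- A CRWL signature with constructors. -/
structure CSig where
  C : ℕ → Type
  F : ℕ → Type

/-- Partial expressions over a CRWL signature. -/
inductive CExpr (S : CSig) : Type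
  | bot : CExpr S
  | var : ℕ → CExpr S
  | con : ∀ {n : ℕ}, S.C n → (Fin n → CExpr S) → CExpr S
  | fn : ∀ {n : ℕ}, S.F n → (Fin n → CExpr S) → CExpr S

/-- A CRWL-algebra over a signature `S`: a poset with bottom together with
monotone, cone-valued interpretations of the symbols; constructors yield
principal ideals, which are generated by a maximal element when all arguments
are maximal. -/
structure CAlg (S : CSig) where
  D : Type
  le : D → D → Prop
  le_refl : ∀ x, le x x
  le_trans : ∀ {x y z}, le x y → le y z → le x z
  le_antisymm : ∀ {x y}, le x y → le y x → x = y
  bot : D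
  bot_le : ∀ x, le bot x
  conI : ∀ {n : ℕ}, S.C n → (Fin n → D) → Set D
  fnI : ∀ {n : ℕ}, S.F n → (Fin n → D) → Set D
  conI_principal : ∀ {n : ℕ} (c : S.C n) (d : Fin n → D),
    ∃ v, conI c d = {y | le y v}
  conI_total : ∀ {n : ℕ} (c : S.C n) (d : Fin n → D),
    (∀ i, ∀ y, le (d i) y → y = d i) →
    ∃ v, conI c d = {y | le y v} ∧ ∀ y, le v y → y = v
  fnI_cone : ∀ {n : ℕ} (f : S.F n) (d : Fin n → D),
    bot ∈ fnI f d ∧ ∀ x y, le x y → y ∈ fnI f d → x ∈ fnI f d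
  conI_mono : ∀ {n : ℕ} (c : S.C n) (d d' : Fin n → D),
    (∀ i, le (d i) (d' i)) → conI c d ⊆ conI c d'
  fnI_mono : ∀ {n : ℕ} (f : S.F n) (d d' : Fin n → D),
    (∀ i, le (d i) (d' i)) → fnI f d ⊆ fnI f d'

/-- Evaluation of a partial expression under a valuation, yielding a cone
(interpretations are extended to cones by taking unions). -/
def ceval {S : CSig} (A : CAlg S) (η : ℕ → A.D) : CExpr S → Set A.D
  | .bot => {y | A.le y A.bot}
  | .var n => {y | A.le y (η n)}
  | .con c args =>
      {v | ∃ d : Fin _ → A.D, (∀ i, d i ∈ ceval A η (args i)) ∧ v ∈ A.conI c d}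
  | .fn f args =>
      {v | ∃ d : Fin _ → A.D, (∀ i, d i ∈ ceval A η (args i)) ∧ v ∈ A.fnI f d}

/-- A CRWL signature morphism: arity-preserving maps of constructor and defined
function symbols. -/
structure SigMor (S S' : CSig) where
  mapC : ∀ n, S.C n → S'.C n
  mapF : ∀ n, S.F n → S'.F n

/-- Homomorphic translation of expressions along a signature morphism
(with `σ(⊥) = ⊥`). -/
def trExpr {S S' : CSig} (σ : SigMor S S') : CExpr S → CExpr S'
  | .bot => .bot
  | .var n => .var n
  | .con c a => .con (σ.mapC _ c) (fun i => trExpr σ (a i))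
  | .fn f a => .fn (σ.mapF _ f) (fun i => trExpr σ (a i))

/-- The reduct of a CRWL-algebra along a signature morphism: same poset,
each symbol `h` interpreted as `σ(h)`. -/
def reduct {S S' : CSig} (σ : SigMor S S') (A : CAlg S') : CAlg S where
  D := A.D
  le := A.le
  le_refl := A.le_refl
  le_trans := A.le_trans
  le_antisymm := A.le_antisymm
  bot := A.bot
  bot_le := A.bot_le
  conI := fun c d => A.conI (σ.mapC _ c) d
  fnI := fun f d => A.fnI (σ.mapF _ f) d
  conI_principal := fun c d => A.conI_principal _ d
  conI_total := fun c d h => A.conI_total _ d h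
  fnI_cone := fun f d => A.fnI_cone _ d
  conI_mono := fun c d d' h => A.conI_mono _ d d' h
  fnI_mono := fun f d d' h => A.fnI_mono _ d d' h


/-- A CRWL sentence: a conditional rewrite rule `lhs → rhs ⇐ conds` with
joinability conditions. -/
structure CRule (S : CSig) where
  lhs : CExpr S
  rhs : CExpr S
  conds : List (CExpr S × CExpr S)

/-- The totally defined (maximal) elements of a CRWL-algebra. -/
def DefSet {S : CSig} (A : CAlg S) : Set A.D := {x | ∀ y, A.le x y → y = x}

/-- Satisfaction of a reduction statement: `[[a]]η ⊇ [[b]]η`. -/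
def satRed {S : CSig} (A : CAlg S) (η : ℕ → A.D) (a b : CExpr S) : Prop :=
  ceval A η b ⊆ ceval A η a

/-- Satisfaction of a joinability statement: the evaluations share a totally
defined element. -/
def satJoin {S : CSig} (A : CAlg S) (η : ℕ → A.D) (a b : CExpr S) : Prop :=
  ∃ x, x ∈ ceval A η a ∧ x ∈ ceval A η b ∧ x ∈ DefSet A

/-- Satisfaction of a conditional rewrite rule. -/
def satRule {S : CSig} (A : CAlg S) (r : CRule S) : Prop :=
  ∀ η : ℕ → A.D, (∀ p ∈ r.conds, satJoin A η p.1 p.2) → satRed A η r.lhs r.rhs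

/-- Translation of a sentence along a signature morphism. -/
def trRule {S S' : CSig} (σ : SigMor S S') (r : CRule S) : CRule S' where
  lhs := trExpr σ r.lhs
  rhs := trExpr σ r.rhs
  conds := r.conds.map (fun p => (trExpr σ p.1, trExpr σ p.2))

lemma ceval_tr {S S' : CSig} (σ : SigMor S S') (A : CAlg S') (η : ℕ → A.D)
    (e : CExpr S) : ceval (reduct σ A) η e = ceval A η (trExpr σ e) := by
  induction e with
  | bot => rfl
  | var n => rfl
  | con c a ih =>
      show ceval (reduct σ A) η (.con c a) = _
      simp only [ceval, trExpr]
      ext v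
      exact ⟨fun ⟨d, hd, hv⟩ => ⟨d, fun i => (ih i) ▸ hd i, hv⟩,
             fun ⟨d, hd, hv⟩ => ⟨d, fun i => (ih i).symm ▸ hd i, hv⟩⟩
  | fn f a ih =>
      show ceval (reduct σ A) η (.fn f a) = _
      simp only [ceval, trExpr]
      ext v
      exact ⟨fun ⟨d, hd, hv⟩ => ⟨d, fun i => (ih i) ▸ hd i, hv⟩,
             fun ⟨d, hd, hv⟩ => ⟨d, fun i => (ih i).symm ▸ hd i, hv⟩⟩

/-- The satisfaction condition for the institution `ℐ_CRWL`: satisfaction in CRWL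
is invariant under signature morphisms, `𝒜' ⊨ σ(φ) ↔ 𝒜'_σ ⊨ φ`. -/
theorem crwl_satisfaction_condition {S S' : CSig} (σ : SigMor S S')
    (A' : CAlg S') (φ : CRule S) :
    satRule A' (trRule σ φ) ↔ satRule (reduct σ A') φ := by
  constructor
  · intro h η hc
    unfold satRed
    rw [ceval_tr σ A' η, ceval_tr σ A' η]
    apply h η
    intro p hp
    simp only [trRule, List.mem_map] at hp
    obtain ⟨q, hq, rfl⟩ := hp
    have := hc q hq
    obtain ⟨x, h1, h2, h3⟩ := this
    exact ⟨x, (ceval_tr σ A' η q.1) ▸ h1, (ceval_tr σ A' η q.2) ▸ h2, h3⟩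
  · intro h η hc
    unfold satRed
    show ceval A' η (trExpr σ φ.rhs) ⊆ ceval A' η (trExpr σ φ.lhs)
    rw [← ceval_tr, ← ceval_tr]
    apply h η
    intro p hp
    have := hc (trExpr σ p.1, trExpr σ p.2) (by simp only [trRule, List.mem_map]; exact ⟨p, hp, rfl⟩)
    obtain ⟨x, h1, h2, h3⟩ := this
    exact ⟨x, (ceval_tr σ A' η p.1).symm ▸ h1, (ceval_tr σ A' η p.2).symm ▸ h2, h3⟩
end

section
/- There exists a CRWL-theory T and a parallel pair of CRWL-homomorphisms F, G : 𝒜 → ℬ between models of T such that F and G have no equalizer in the category of models of T. Concretely: Σ has no constructors and two 0-ary function symbols f₁, f₂; Γ = {f₂ → x ⇐ f₁ ⋈ f₁}; 𝒜 has carrier {⊥, a₁, a₂} with ⊥ ⊑ a₁ ⊑ a₂, f₁^𝒜 = ⟨a₁⟩, f₂^𝒜 = ⟨⊥⟩; ℬ has carrier {⊥, b₁} with f₁^ℬ = f₂^ℬ = ⟨⊥⟩; F maps everything to ⟨⊥⟩, and G maps ⊥, a₁ to ⟨⊥⟩ and a₂ to ⟨b₁⟩. Then F, G are CRWL-homomorphisms,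 𝒜, ℬ ⊨ Γ, yet no equalizer of F and G exists. -/
/-- A CRWL-algebra for the signature with no constructors and two 0-ary defined
function symbols `f₁`, `f₂`: a poset with bottom together with two cones `I1`,
`I2` interpreting `f₁` and `f₂`. -/
structure PModel where
  D : Type
  le : D → D → Prop
  le_refl : ∀ x, le x x
  le_trans : ∀ {x y z}, le x y → le y z → le x z
  le_antisymm : ∀ {x y}, le x y → le y x → x = y
  bot : D
  bot_le : ∀ x, le bot x
  I1 : Set D
  I2 : Set D
  I1_cone : bot ∈ I1 ∧ ∀ x y, le x y → y ∈ I1 → x ∈ I1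
  I2_cone : bot ∈ I2 ∧ ∀ x y, le x y → y ∈ I2 → x ∈ I2

/-- Satisfaction of `Γ = {f₂ → x ⇐ f₁ ⋈ f₁}`: if `f₁ ⋈ f₁` holds (i.e. `I1`
contains a maximal element) then `⟨η(x)⟩ ⊆ I2` for every valuation, i.e. every
element is in `I2`. -/
def IsMdl (M : PModel) : Prop :=
  (∃ x ∈ M.I1, ∀ y, M.le x y → y = x) → ∀ d, d ∈ M.I2

/-- A CRWL-homomorphism between such algebras, represented by the generator
function of its (element-valued) cone-valued map: monotone, strict, and loosely
preserving the two defined functions. -/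
structure PHom (A B : PModel) where
  f : A.D → B.D
  mono : ∀ x y, A.le x y → B.le (f x) (f y)
  strict : f A.bot = B.bot
  p1 : ∀ x ∈ A.I1, f x ∈ B.I1
  p2 : ∀ x ∈ A.I2, f x ∈ B.I2

/-- Composition of CRWL-homomorphisms. -/
def pcomp {A B C : PModel} (g : PHom B C) (h : PHom A B) : PHom A C where
  f := fun x => g.f (h.f x)
  mono := fun x y hxy => g.mono _ _ (h.mono _ _ hxy)
  strict := by show g.f (h.f A.bot) = C.bot; rw [h.strict, g.strict]
  p1 := fun x hx => g.p1 _ (h.p1 _ hx)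
  p2 := fun x hx => g.p2 _ (h.p2 _ hx)

/-- The algebra `𝒜`: carrier `{⊥, a₁, a₂}` with `⊥ ⊑ a₁ ⊑ a₂`,
`f₁^𝒜 = ⟨a₁⟩`, `f₂^𝒜 = ⟨⊥⟩`. -/
def MA : PModel where
  D := Fin 3
  le := (· ≤ ·)
  le_refl := fun x => le_refl x
  le_trans := fun h h' => le_trans h h'
  le_antisymm := fun h h' => le_antisymm h h'
  bot := 0
  bot_le := fun x => Fin.zero_le x
  I1 := {x | x ≤ 1}
  I2 := {x | x ≤ 0}
  I1_cone := ⟨by decide, fun x y hxy hy => le_trans hxy hy⟩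
  I2_cone := ⟨by decide, fun x y hxy hy => le_trans hxy hy⟩

/-- The algebra `ℬ`: carrier `{⊥, b₁}` with `f₁^ℬ = f₂^ℬ = ⟨⊥⟩`. -/
def MB : PModel where
  D := Fin 2
  le := (· ≤ ·)
  le_refl := fun x => le_refl x
  le_trans := fun h h' => le_trans h h'
  le_antisymm := fun h h' => le_antisymm h h'
  bot := 0
  bot_le := fun x => Fin.zero_le x
  I1 := {x | x ≤ 0}
  I2 := {x | x ≤ 0}
  I1_cone := ⟨by decide, fun x y hxy hy => le_trans hxy hy⟩
  I2_cone := ⟨by decide, fun x y hxy hy => le_trans hxy hy⟩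

/-- The underlying function of `G`. -/
def gfun : Fin 3 → Fin 2 := fun x => if x = 2 then 1 else 0

private lemma gfun_mono : ∀ x y : Fin 3, x ≤ y → gfun x ≤ gfun y := by decide
private lemma gfun_p1 : ∀ x : Fin 3, x ≤ 1 → gfun x ≤ 0 := by decide
private lemma gfun_p2 : ∀ x : Fin 3, x ≤ 0 → gfun x ≤ 0 := by decide

/-- The homomorphism `F`, sending everything to `⟨⊥⟩`. -/
def FH : PHom MA MB where
  f := fun _ => (0 : Fin 2)
  mono := fun _ _ _ => le_refl (0 : Fin 2)
  strict := rfl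
  p1 := fun _ _ => le_refl (0 : Fin 2)
  p2 := fun _ _ => le_refl (0 : Fin 2)

/-- The homomorphism `G`, sending `⊥, a₁` to `⟨⊥⟩` and `a₂` to `⟨b₁⟩`. -/
def GH : PHom MA MB where
  f := gfun
  mono := fun x y h => gfun_mono x y h
  strict := rfl
  p1 := fun x hx => gfun_p1 x hx
  p2 := fun x hx => gfun_p2 x hx


private lemma PHom.ext' {A B : PModel} {h1 h2 : PHom A B} (h : h1.f = h2.f) : h1 = h2 := by
  cases h1; cases h2; simp_all

instance : LinearOrder MA.D := inferInstanceAs (LinearOrder (Fin 3))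
instance : LinearOrder MB.D := inferInstanceAs (LinearOrder (Fin 2))
instance : Fintype MA.D := inferInstanceAs (Fintype (Fin 3))
instance : Fintype MB.D := inferInstanceAs (Fintype (Fin 2))
instance (n : ℕ) : OfNat MA.D n := inferInstanceAs (OfNat (Fin 3) n)
instance (n : ℕ) : OfNat MB.D n := inferInstanceAs (OfNat (Fin 2) n)
instance : DecidableRel MA.le := fun a b => inferInstanceAs (Decidable ((a : Fin 3) ≤ b))
instance : DecidableRel MB.le := fun a b => inferInstanceAs (Decidable ((a : Fin 2) ≤ b))
instance : DecidablePred (· ∈ MA.I1) := fun a => inferInstanceAs (Decidable ((a : Fin 3) ≤ 1))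
instance : DecidablePred (· ∈ MA.I2) := fun a => inferInstanceAs (Decidable ((a : Fin 3) ≤ 0))
instance : DecidablePred (· ∈ MB.I1) := fun a => inferInstanceAs (Decidable ((a : Fin 2) ≤ 0))
instance : DecidablePred (· ∈ MB.I2) := fun a => inferInstanceAs (Decidable ((a : Fin 2) ≤ 0))

/-- inclusion MB -> MA -/
private def m2 : PHom MB MA where
  f := fun b => if b = 0 then 0 else 1
  mono := by decide
  strict := by decide
  p1 := by decide
  p2 := by decide

/-- cap at 1 : MA -> MA -/
private def mcap : PHom MA MA where
  f := fun x => min x 1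
  mono := by decide
  strict := by decide
  p1 := by decide
  p2 := by decide

private lemma m2_eq : pcomp FH m2 = pcomp GH m2 := by
  apply PHom.ext'; funext x; revert x; decide

private lemma mcap_eq : pcomp FH mcap = pcomp GH mcap := by
  apply PHom.ext'; funext x; revert x; decide

private lemma mdlA : IsMdl MA := by
  rintro ⟨x, hx, hmax⟩
  have h2 := hmax 2 (show MA.le x 2 from Fin.le_last x)
  subst h2
  exact absurd hx (by decide)

private lemma mdlB : IsMdl MB := by
  rintro ⟨x, hx, hmax⟩
  have h2 := hmax 1 (show MB.le x 1 from Fin.le_last x)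
  subst h2
  exact absurd hx (by decide)

/-- candidate hom `MB → E` sending `0 ↦ ⊥`, `1 ↦ y`. -/
private def kcand (E : PModel) (y : E.D) : PHom MB E where
  f := fun b => if b = 0 then E.bot else y
  mono := by
    intro a b hab
    by_cases ha : a = 0
    · subst ha; simp only [if_pos rfl]; exact E.bot_le _
    · have hb : b ≠ 0 := by
        intro hb0; subst hb0
        exact ha (Fin.le_zero_iff.mp hab)
      simp only [if_neg ha, if_neg hb]; exact E.le_refl _
  strict := by
    show (if MB.bot = 0 then E.bot else y) = E.bot
    rw [if_pos (show MB.bot = 0 from rfl)]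
  p1 := by
    intro x hx
    have hx0 : x = 0 := Fin.le_zero_iff.mp hx
    subst hx0; simpa using E.I1_cone.1
  p2 := by
    intro x hx
    have hx0 : x = 0 := Fin.le_zero_iff.mp hx
    subst hx0; simpa using E.I2_cone.1

/-- `𝒜` and `ℬ` are models of `Γ = {f₂ → x ⇐ f₁ ⋈ f₁}`, `F` and `G` are
CRWL-homomorphisms between them (by construction), yet `F` and `G` have no
equalizer in the category of models of `Γ`. -/
theorem no_equalizer :
    IsMdl MA ∧ IsMdl MB ∧
    ¬ ∃ (E : PModel) (_ : IsMdl E) (e : PHom E MA),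
        pcomp FH e = pcomp GH e ∧
        ∀ (C : PModel), IsMdl C → ∀ m : PHom C MA,
          pcomp FH m = pcomp GH m → ∃! k : PHom C E, pcomp e k = m := by
  refine ⟨mdlA, mdlB, ?_⟩
  rintro ⟨E, hE, e, heq, huniv⟩
  have heqf : ∀ x, gfun (e.f x) = 0 := fun x =>
    (congrFun (congrArg PHom.f heq) x).symm
  have hle : ∀ x, MA.le (e.f x) 1 := by
    intro x
    have key : ∀ v : Fin 3, gfun v = 0 → v ≤ 1 := by decide
    exact key _ (heqf x)
  obtain ⟨k, hk, huniq⟩ := huniv MB mdlB m2 m2_eq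
  have hu : e.f (k.f 1) = 1 := by
    have := congrFun (congrArg PHom.f hk) 1
    exact this.trans (show m2.f 1 = 1 by decide)
  have huy : ∀ y, e.f y = 1 → y = k.f 1 := by
    intro y hy
    have hcomp : pcomp e (kcand E y) = m2 := by
      apply PHom.ext'; funext b
      by_cases hb : b = 0
      · subst hb
        show e.f (if (0:Fin 2) = 0 then E.bot else y) = m2.f 0
        rw [if_pos rfl, e.strict]
        decide
      · show e.f (if b = 0 then E.bot else y) = m2.f b
        rw [if_neg hb, hy]
        show (1 : Fin 3) = if b = 0 then 0 else 1
        rw [if_neg hb]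
    have heqk := huniq (kcand E y) hcomp
    calc y = (kcand E y).f 1 := by
          show y = if (1:Fin 2) = 0 then E.bot else y
          rw [if_neg (by decide : ¬(1:Fin 2) = 0)]
    _ = k.f 1 := by rw [heqk]
  obtain ⟨k2, hk2, -⟩ := huniv MA mdlA mcap mcap_eq
  have hw1 : e.f (k2.f 1) = 1 := by
    have := congrFun (congrArg PHom.f hk2) 1
    simpa [pcomp, mcap] using this
  have hwu : k2.f 1 = k.f 1 := huy _ hw1
  have huI1 : k.f 1 ∈ E.I1 := hwu ▸ k2.p1 1 (by decide)
  have hmax : ∀ y, E.le (k.f 1) y → y = k.f 1 := by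
    intro y hy
    have h1 : MA.le (e.f (k.f 1)) (e.f y) := e.mono _ _ hy
    rw [hu] at h1
    have h2 : e.f y = 1 := MA.le_antisymm (hle y) h1
    exact huy y h2
  have hu2 : k.f 1 ∈ E.I2 := hE ⟨k.f 1, huI1, hmax⟩ _
  have hfin := e.p2 _ hu2
  rw [hu] at hfin
  exact absurd hfin (by decide)
end

section
/- Extended satisfaction of conditional rules in rewriting logic via subequalizers agrees with deduction from added assumptions: for an RL-theory ℛ and a conditional rule [t(x̄)] → [t'(x̄)] if [a₁]→[b₁] ∧...∧ [aₘ]→[bₘ], if ℛ(x̄) ∪ {[aᵢ(x̄)] → [bᵢ(x̄)] : 1 ≤ i ≤ m} ⊢ [t(x̄)] → [t'(x̄)] (derivable in the RL-calculus treating the variables x̄ as fresh constants), then every ℛ-system 𝒮 satisfies the conditional rule, i.e., there exists a natural transformation α : t_𝒮 ∘ J_𝒮 ⇒ t'_𝒮 ∘ J_𝒮, where J_𝒮 is the subequalizer functor of the pairs (a_{j𝒮}, b_{j𝒮}). -/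
open CategoryTheory

universe v u

/-- Terms over a ranked alphabet `Op` with `n` variables. -/
inductive Tm (Op : ℕ → Type) (n : ℕ) : Type
  | var : Fin n → Tm Op n
  | op : ∀ {m : ℕ}, Op m → (Fin m → Tm Op n) → Tm Op n

/-- Substitution of ground terms for the variables of a term. -/
def tsub {Op : ℕ → Type} {n : ℕ} (θ : Fin n → Tm Op 0) : Tm Op n → Tm Op 0
  | .var i => θ i
  | .op f args => .op f (fun j => tsub θ (args j))

/-- Renaming of operation symbols. -/
def tmap {Op Op' : ℕ → Type} (σ : ∀ m, Op m → Op' m) {n : ℕ} :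
    Tm Op n → Tm Op' n
  | .var i => .var i
  | .op f args => .op (σ _ f) (fun j => tmap σ (args j))

/-- The ranked alphabet `Op` extended with `k` fresh constants `x̄`
(the theory `ℛ(x̄)`). -/
def OpX (Op : ℕ → Type) (k : ℕ) : ℕ → Type :=
  fun n => Op n ⊕ (Fin k × PLift (n = 0))

/-- A term with `k` variables, viewed as a ground term over the extension of the
signature by `k` fresh constants. -/
def embed {Op : ℕ → Type} {k : ℕ} : Tm Op k → Tm (OpX Op k) 0
  | .var i => .op (Sum.inr (i, ⟨rfl⟩)) Fin.elim0
  | .op f args => .op (Sum.inl f) (fun j => embed (args j))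

/-- Ground equational deduction from a set of equations (each with its own
number of variables): substitution instances, reflexivity, symmetry,
transitivity and congruence. -/
inductive EqG (Op : ℕ → Type) (E : Set (Σ n : ℕ, Tm Op n × Tm Op n)) :
    Tm Op 0 → Tm Op 0 → Prop
  | ax {e : Σ n : ℕ, Tm Op n × Tm Op n} (he : e ∈ E) (θ : Fin e.1 → Tm Op 0) :
      EqG Op E (tsub θ e.2.1) (tsub θ e.2.2)
  | refl (t : Tm Op 0) : EqG Op E t t
  | symm {t t' : Tm Op 0} : EqG Op E t t' → EqG Op E t' t
  | trans {t t' t'' : Tm Op 0} :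
      EqG Op E t t' → EqG Op E t' t'' → EqG Op E t t''
  | congr {m : ℕ} (f : Op m) {a a' : Fin m → Tm Op 0} :
      (∀ i, EqG Op E (a i) (a' i)) → EqG Op E (.op f a) (.op f a')

/-- A conditional rewrite rule, packaged with its number of variables. -/
structure GRule (Op : ℕ → Type) where
  k : ℕ
  l : Tm Op k
  r : Tm Op k
  c : List (Tm Op k × Tm Op k)

/-- The RL-calculus on ground terms, modulo the equations `E` (the Reflexivity
rule on `E`-equivalence classes), with Transitivity, Congruence and Replacement
for the conditional rules in `R`. -/
inductive GDeriv (Op : ℕ → Type) (E : Set (Σ n : ℕ, Tm Op n × Tm Op n))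
    (R : Set (GRule Op)) : Tm Op 0 → Tm Op 0 → Prop
  | eq {t t' : Tm Op 0} : EqG Op E t t' → GDeriv Op E R t t'
  | trans {t t' t'' : Tm Op 0} :
      GDeriv Op E R t t' → GDeriv Op E R t' t'' → GDeriv Op E R t t''
  | congr {m : ℕ} (f : Op m) {a a' : Fin m → Tm Op 0} :
      (∀ i, GDeriv Op E R (a i) (a' i)) →
      GDeriv Op E R (.op f a) (.op f a')
  | repl {ρ : GRule Op} (hρ : ρ ∈ R) (w w' : Fin ρ.k → Tm Op 0)
      (hw : ∀ i, GDeriv Op E R (w i) (w' i))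
      (hc : ∀ p ∈ ρ.c, GDeriv Op E R (tsub w p.1) (tsub w p.2)) :
      GDeriv Op E R (tsub w ρ.l) (tsub w' ρ.r)

/-- An RL-theory with conditional rewrite rules. -/
structure RLTh where
  Op : ℕ → Type
  Eqs : Set (Σ n : ℕ, Tm Op n × Tm Op n)
  RIdx : Type
  rN : RIdx → ℕ
  rL : ∀ r, Tm Op (rN r)
  rR : ∀ r, Tm Op (rN r)
  rC : ∀ r, List (Tm Op (rN r) × Tm Op (rN r))

/-- Interpretation of a term as a functor, given interpretations of the
operations as functors. -/
def interpTm {Op : ℕ → Type} {S : Type u} [Category.{v} S]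
    (I : ∀ {m : ℕ}, Op m → ((∀ _ : Fin m, S) ⥤ S)) {n : ℕ} :
    Tm Op n → ((∀ _ : Fin n, S) ⥤ S)
  | .var i => Pi.eval _ i
  | .op f args => Functor.pi' (fun j => interpTm I (args j)) ⋙ I f

/-- An object of the subequalizer of a family `{Fᵢ, Gᵢ : A ⥤ B}`. -/
structure SubeqObj {ι : Type} {A : Type u} [Category.{v} A] {B : Type u}
    [Category.{v} B] (F G : ι → (A ⥤ B)) : Type max u v where
  pt : A
  b : ∀ i, (F i).obj pt ⟶ (G i).obj pt

instance subeqCategory {ι : Type} {A : Type u} [Category.{v} A] {B : Type u}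
    [Category.{v} B] (F G : ι → (A ⥤ B)) : Category (SubeqObj F G) where
  Hom X Y := {f : X.pt ⟶ Y.pt // ∀ i, X.b i ≫ (G i).map f = (F i).map f ≫ Y.b i}
  id X := ⟨𝟙 X.pt, fun i => by simp⟩
  comp f g := ⟨f.1 ≫ g.1, fun i => by
    rw [(F i).map_comp, (G i).map_comp, ← Category.assoc, f.2 i,
      Category.assoc, g.2 i, Category.assoc]⟩
  id_comp f := Subtype.ext (Category.id_comp f.1)
  comp_id f := Subtype.ext (Category.comp_id f.1)
  assoc f g h := Subtype.ext (Category.assoc f.1 g.1 h.1)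

/-- The subequalizer (projection) functor `J`. -/
def subeqJ {ι : Type} {A : Type u} [Category.{v} A] {B : Type u}
    [Category.{v} B] (F G : ι → (A ⥤ B)) : SubeqObj F G ⥤ A where
  obj X := X.pt
  map f := f.1

/-- An `ℛ`-system for an RL-theory with conditional rules: a category with a
functorial algebra structure satisfying the equations, and for each conditional
rule a natural transformation between the composites of the term functors with
the subequalizer functor of the condition. -/
structure RSys (T : RLTh) : Type (max (u + 1) (v + 1)) where
  S : Type u
  [cat : Category.{v} S]
  I : ∀ {m : ℕ}, T.Op m → ((∀ _ : Fin m, S) ⥤ S)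
  eqs : ∀ e ∈ T.Eqs, interpTm I e.2.1 = interpTm I e.2.2
  nt : ∀ r : T.RIdx,
    subeqJ (fun j : Fin (T.rC r).length => interpTm I ((T.rC r).get j).1)
        (fun j => interpTm I ((T.rC r).get j).2) ⋙ interpTm I (T.rL r) ⟶
    subeqJ (fun j : Fin (T.rC r).length => interpTm I ((T.rC r).get j).1)
        (fun j => interpTm I ((T.rC r).get j).2) ⋙ interpTm I (T.rR r)

attribute [instance] RSys.cat

/-- The equations of `T`, over the signature extended by `k` constants. -/
def extEqs (T : RLTh) (k : ℕ) : Set (Σ n : ℕ, Tm (OpX T.Op k) n × Tm (OpX T.Op k) n) :=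
  {e | ∃ e₀ ∈ T.Eqs, e = ⟨e₀.1, (tmap (fun _ => Sum.inl) e₀.2.1,
    tmap (fun _ => Sum.inl) e₀.2.2)⟩}

/-- The rules of the theory `ℛ(x̄) ∪ {[aᵢ(x̄)] → [bᵢ(x̄)]}`: the rules of `T`
over the extended signature, together with one unconditional ground rule for
each condition `aᵢ → bᵢ` instantiated at the fresh constants `x̄`. -/
def extRules (T : RLTh) (k : ℕ)
    (conds : List (Tm T.Op k × Tm T.Op k)) : Set (GRule (OpX T.Op k)) :=
  {ρ | ∃ r : T.RIdx, ρ = ⟨T.rN r, tmap (fun _ => Sum.inl) (T.rL r),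
      tmap (fun _ => Sum.inl) (T.rR r),
      (T.rC r).map (fun p => (tmap (fun _ => Sum.inl) p.1,
        tmap (fun _ => Sum.inl) p.2))⟩} ∪
  {ρ | ∃ p ∈ conds, ρ = ⟨0, embed p.1, embed p.2, []⟩}

section Soundness

/-- Substituting into a ground term does nothing. -/
lemma tsub_ground {Op : ℕ → Type} (θ : Fin 0 → Tm Op 0) :
    ∀ t : Tm Op 0, tsub θ t = t
  | .var i => i.elim0
  | .op f args => by
      show Tm.op f (fun j => tsub θ (args j)) = _
      congr 1
      funext j
      exact tsub_ground θ (args j)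

/-- A natural transformation between `pi'` functors from componentwise
natural transformations. -/
def piNT {A : Type (max u v)} [Category.{v} A] {B : Type u} [Category.{v} B] {m : ℕ}
    {F G : Fin m → (A ⥤ B)} (α : ∀ j, F j ⟶ G j) :
    Functor.pi' F ⟶ Functor.pi' G where
  app X := fun j => (α j).app X
  naturality X Y f := funext fun j => (α j).naturality f

variable {T : RLTh} {k : ℕ} (conds : List (Tm T.Op k × Tm T.Op k))
  (Sys : RSys.{v, u} T)

/-- The subequalizer category of the condition. -/
abbrev CondSubeq :=
  SubeqObj (fun j : Fin conds.length => interpTm Sys.I (conds.get j).1)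
    (fun j => interpTm Sys.I (conds.get j).2)

/-- Interpretation of ground terms over the extended signature as functors
from the subequalizer category. -/
def Gt : Tm (OpX T.Op k) 0 → (CondSubeq conds Sys ⥤ Sys.S)
  | .var i => i.elim0
  | .op (Sum.inl f) args => Functor.pi' (fun j => Gt (args j)) ⋙ Sys.I f
  | .op (Sum.inr p) _ => subeqJ _ _ ⋙ Pi.eval _ p.1

/-- Substitution lemma for `Gt`. -/
lemma Gt_sub {n : ℕ} (θ : Fin n → Tm (OpX T.Op k) 0) :
    ∀ s : Tm T.Op n,
      Gt conds Sys (tsub θ (tmap (fun _ => Sum.inl) s)) =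
        Functor.pi' (fun i => Gt conds Sys (θ i)) ⋙ interpTm Sys.I s
  | .var i => rfl
  | .op f args => by
      show Functor.pi'
          (fun j => Gt conds Sys (tsub θ (tmap (fun _ => Sum.inl) (args j))))
          ⋙ Sys.I f = _
      have h : (fun j => Gt conds Sys (tsub θ (tmap (fun _ => Sum.inl) (args j))))
          = fun j => Functor.pi' (fun i => Gt conds Sys (θ i)) ⋙
              interpTm Sys.I (args j) :=
        funext fun j => Gt_sub θ (args j)
      rw [h]
      rfl

/-- `Gt` on embedded terms is the composite with the subequalizer functor. -/
lemma Gt_embed :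
    ∀ s : Tm T.Op k,
      Gt conds Sys (embed s) = subeqJ _ _ ⋙ interpTm Sys.I s
  | .var i => rfl
  | .op f args => by
      show Functor.pi' (fun j => Gt conds Sys (embed (args j))) ⋙ Sys.I f = _
      have h : (fun j => Gt conds Sys (embed (args j)))
          = fun j => subeqJ _ _ ⋙ interpTm Sys.I (args j) :=
        funext fun j => Gt_embed (args j)
      rw [h]
      rfl

/-- `Gt` respects equational deduction from the extended equations. -/
lemma Gt_eq {u u' : Tm (OpX T.Op k) 0}
    (h : EqG (OpX T.Op k) (extEqs T k) u u') :
    Gt conds Sys u = Gt conds Sys u' := by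
  induction h with
  | ax he θ =>
      obtain ⟨e₀, he₀, rfl⟩ := he
      rw [Gt_sub conds Sys θ e₀.2.1, Gt_sub conds Sys θ e₀.2.2,
        Sys.eqs e₀ he₀]
  | refl t => rfl
  | symm _ ih => exact ih.symm
  | trans _ _ ih₁ ih₂ => exact ih₁.trans ih₂
  | congr f _ ih =>
      match f with
      | Sum.inl f =>
          show Functor.pi' _ ⋙ Sys.I f = Functor.pi' _ ⋙ Sys.I f
          rw [funext ih]
      | Sum.inr ⟨i, ⟨hm⟩⟩ =>
          subst hm
          rename_i a a' _
          have : a = a' := funext fun j => j.elim0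
          rw [this]

/-- The natural transformation given by the subequalizer structure maps. -/
def condNT (j : Fin conds.length) :
    subeqJ (fun j : Fin conds.length => interpTm Sys.I (conds.get j).1)
        (fun j => interpTm Sys.I (conds.get j).2) ⋙
      interpTm Sys.I (conds.get j).1 ⟶
    subeqJ (fun j : Fin conds.length => interpTm Sys.I (conds.get j).1)
        (fun j => interpTm Sys.I (conds.get j).2) ⋙
      interpTm Sys.I (conds.get j).2 where
  app X := X.b j
  naturality X Y f := (f.2 j).symm

/-- Soundness of the extended RL-calculus, main induction. -/
lemma Gt_deriv {u u' : Tm (OpX T.Op k) 0}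
    (h : GDeriv (OpX T.Op k) (extEqs T k) (extRules T k conds) u u') :
    Nonempty (Gt conds Sys u ⟶ Gt conds Sys u') := by
  induction h with
  | eq he => rw [Gt_eq conds Sys he]; exact ⟨𝟙 _⟩
  | trans _ _ ih₁ ih₂ => exact ⟨ih₁.some ≫ ih₂.some⟩
  | congr f _ ih =>
      match f with
      | Sum.inl f =>
          rename_i a a' _
          have α : Functor.pi' (fun j => Gt conds Sys (a j)) ⋙ Sys.I f ⟶
              Functor.pi' (fun j => Gt conds Sys (a' j)) ⋙ Sys.I f :=
            Functor.whiskerRight (piNT (F := fun j => Gt conds Sys (a j))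
              (G := fun j => Gt conds Sys (a' j)) fun j => (ih j).some) (Sys.I f)
          exact ⟨α⟩
      | Sum.inr ⟨i, ⟨hm⟩⟩ =>
          subst hm
          rename_i a a' _
          have : a = a' := funext fun j => j.elim0
          rw [this]
          exact ⟨𝟙 _⟩
  | repl hρ w w' hw hc ihw ihc =>
      rcases hρ with ⟨r, rfl⟩ | ⟨p, hp, rfl⟩
      · -- a rule of the original theory
        rw [Gt_sub conds Sys w (T.rL r), Gt_sub conds Sys w' (T.rR r)]
        set P := Functor.pi' (fun i => Gt conds Sys (w i)) with hP
        have β : ∀ j : Fin (T.rC r).length,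
            P ⋙ interpTm Sys.I ((T.rC r).get j).1 ⟶
            P ⋙ interpTm Sys.I ((T.rC r).get j).2 := by
          intro j
          have hmem : ((tmap (fun _ => Sum.inl) ((T.rC r).get j).1 :
                Tm (OpX T.Op k) (T.rN r)),
              (tmap (fun _ => Sum.inl) ((T.rC r).get j).2 :
                Tm (OpX T.Op k) (T.rN r))) ∈
              (T.rC r).map (fun p => ((tmap (fun _ => Sum.inl) p.1 :
                  Tm (OpX T.Op k) (T.rN r)),
                (tmap (fun _ => Sum.inl) p.2 : Tm (OpX T.Op k) (T.rN r)))) :=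
            List.mem_map_of_mem ((T.rC r).get_mem j)
          have h := (ihc _ hmem).some
          rwa [Gt_sub conds Sys w ((T.rC r).get j).1,
            Gt_sub conds Sys w ((T.rC r).get j).2] at h
        let W : CondSubeq conds Sys ⥤
            SubeqObj (fun j : Fin (T.rC r).length =>
              interpTm Sys.I ((T.rC r).get j).1)
              (fun j => interpTm Sys.I ((T.rC r).get j).2) :=
          { obj := fun X => ⟨P.obj X, fun j => (β j).app X⟩
            map := fun f => ⟨P.map f, fun j => ((β j).naturality f).symm⟩
            map_id := fun X => Subtype.ext (P.map_id X)
            map_comp := fun f g => Subtype.ext (P.map_comp f g) }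
        have α₁ : P ⋙ interpTm Sys.I (T.rL r) ⟶ P ⋙ interpTm Sys.I (T.rR r) :=
          Functor.whiskerLeft W (Sys.nt r)
        have α₂ : P ⋙ interpTm Sys.I (T.rR r) ⟶
            Functor.pi' (fun i => Gt conds Sys (w' i)) ⋙ interpTm Sys.I (T.rR r) :=
          Functor.whiskerRight (piNT (F := fun i => Gt conds Sys (w i))
            (G := fun i => Gt conds Sys (w' i)) fun i => (ihw i).some)
            (interpTm Sys.I (T.rR r))
        exact ⟨α₁ ≫ α₂⟩
      · -- an assumption rule from the condition
        show Nonempty (Gt conds Sys (tsub w (embed p.1)) ⟶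
          Gt conds Sys (tsub w' (embed p.2)))
        rw [tsub_ground w (embed p.1), tsub_ground w' (embed p.2),
          Gt_embed conds Sys p.1, Gt_embed conds Sys p.2]
        obtain ⟨j, hj⟩ := List.get_of_mem hp
        rw [← hj]
        exact ⟨condNT conds Sys j⟩

end Soundness

/-- Soundness of the extended RL-calculus for conditional rules: if
`ℛ(x̄) ∪ {[aᵢ(x̄)] → [bᵢ(x̄)]} ⊢ [t(x̄)] → [t'(x̄)]`, then every `ℛ`-system `𝒮`
satisfies the conditional rule `[t] → [t'] if [a₁]→[b₁] ∧ … ∧ [aₘ]→[bₘ]`,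
i.e. there is a natural transformation `t_𝒮 ∘ J_𝒮 ⇒ t'_𝒮 ∘ J_𝒮` where `J_𝒮`
is the subequalizer functor of the condition. -/
theorem deduction_implies_satisfaction (T : RLTh) (k : ℕ)
    (t t' : Tm T.Op k) (conds : List (Tm T.Op k × Tm T.Op k))
    (hded : GDeriv (OpX T.Op k) (extEqs T k) (extRules T k conds)
      (embed t) (embed t')) :
    ∀ Sys : RSys T,
      Nonempty
        (subeqJ (fun j : Fin conds.length => interpTm Sys.I (conds.get j).1)
            (fun j => interpTm Sys.I (conds.get j).2) ⋙ interpTm Sys.I t ⟶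
         subeqJ (fun j : Fin conds.length => interpTm Sys.I (conds.get j).1)
            (fun j => interpTm Sys.I (conds.get j).2) ⋙ interpTm Sys.I t') := by
  intro Sys
  have h := Gt_deriv conds Sys hded
  rwa [Gt_embed conds Sys t, Gt_embed conds Sys t'] at h
end
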